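/- arXiv:1101.4241 — 2 statements merged into one kernel-verified Lean document; each statement's English description precedes it below -/
import Mathlib

section
/- Let Λ be an artin algebra and let 0 → N →j→ E →π→ M → 0 be an almost split sequence in mod Λ. Then the sequence 0 → (1_N : N → N) → (j : N → E) → (0 → M) → 0 in maps(mod Λ), whose first morphism has components 1_N : N → N and j : N → E, and whose second morphism has components 0 : N → 0 and π : E → M, is an almost split sequence in maps(mod Λ). -/
/-!
The target functor `Arrow C ⥤ C` has a left adjoint `X ↦ (⊥ ⟶ X)` and a right adjoint
`X ↦ 𝟙 X`, so it preserves zero objects and binary (co)products: it carries a direct sum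
decomposition of `1_N`, or of `0 → M`, to one of `N`, or of `M`. It kills a summand only if that
summand is zero, because summands of `1_N` are isomorphisms and summands of `0 → M` have zero
source. A map `u` to `0 → M` which is not a split epimorphism has a target component which is
not one either; that component lifts along `π`, and then the source component lifts along `j`,
the kernel of `π`.
-/

open CategoryTheory CategoryTheory.Limits

universe u

/-- An object of a category is indecomposable if it is nonzero and in any direct sum
decomposition (encoded as a compatible product-and-coproduct diagram) one of the two
summands is zero. -/
def IsIndecomposable {C : Type*} [Category C] (X : C) : Prop :=
  ¬ IsZero X ∧
    ∀ ⦃Y Z : C⦄ (p : X ⟶ Y) (q : X ⟶ Z) (i : Y ⟶ X) (j : Z ⟶ X),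
      i ≫ p = 𝟙 Y → j ≫ q = 𝟙 Z →
      Nonempty (IsLimit (BinaryFan.mk p q)) →
      Nonempty (IsColimit (BinaryCofan.mk i j)) →
      IsZero Y ∨ IsZero Z

/-- The categorical conditions for a short exact sequence `0 → N → E → M → 0` to be
almost split: it does not split (`β` is not a split epimorphism), both ends are
indecomposable, and every morphism to `M` which is not a split epimorphism factors
through `β`. -/
def IsAlmostSplitSeq {C : Type*} [Category C] {N E M : C} (_α : N ⟶ E) (β : E ⟶ M) : Prop :=
  ¬ IsSplitEpi β ∧ IsIndecomposable N ∧ IsIndecomposable M ∧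
    ∀ ⦃X : C⦄ (u : X ⟶ M), ¬ IsSplitEpi u → ∃ v : X ⟶ E, v ≫ β = u

/-- Short exactness of `0 → N → E → M → 0` in `mod Λ`, stated concretely. -/
def IsShortExactSeq {Λ : Type u} [Ring Λ] {N E M : FGModuleCat Λ}
    (α : N ⟶ E) (β : E ⟶ M) : Prop :=
  Function.Injective ⇑α ∧ Function.Exact ⇑α ⇑β ∧ Function.Surjective ⇑β

/-- Componentwise short exactness of a sequence in `maps (mod Λ)`. -/
def IsShortExactSeqMaps {Λ : Type u} [Ring Λ] {X Y Z : Arrow (FGModuleCat Λ)}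
    (α : X ⟶ Y) (β : Y ⟶ Z) : Prop :=
  IsShortExactSeq α.left β.left ∧ IsShortExactSeq α.right β.right

/-- An almost split sequence in `maps (mod Λ)`: a componentwise short exact sequence
which is almost split. -/
def IsAlmostSplitSeqMaps {Λ : Type u} [Ring Λ] {X Y Z : Arrow (FGModuleCat Λ)}
    (α : X ⟶ Y) (β : Y ⟶ Z) : Prop :=
  IsShortExactSeqMaps α β ∧ IsAlmostSplitSeq α β

section
variable {C D : Type*} [Category C] [Category D]

lemma CategoryTheory.Functor.map_isZero_of_isLeftAdjoint_of_isRightAdjoint (F : C ⥤ D)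
    [F.IsLeftAdjoint] [F.IsRightAdjoint] {X : C} (hX : IsZero X) : IsZero (F.obj X) :=
  ⟨fun Y => ⟨@Equiv.unique _ _ (hX.unique_to _).some
      ((Adjunction.ofIsLeftAdjoint F).homEquiv X Y)⟩,
    fun Y => ⟨@Equiv.unique _ _ (hX.unique_from _).some
      ((Adjunction.ofIsRightAdjoint F).homEquiv Y X).symm⟩⟩

lemma CategoryTheory.Retract.isZero [HasZeroMorphisms C] {X Y : C} (h : Retract X Y)
    (hY : IsZero Y) : IsZero X := by
  rw [IsZero.iff_id_eq_zero, ← h.retract, hY.eq_of_src h.r 0, comp_zero]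

lemma IsIndecomposable.of_map (F : C ⥤ D) [F.IsLeftAdjoint] [F.IsRightAdjoint] {X : C}
    (hX : IsIndecomposable (F.obj X))
    (hF : ∀ Y, Retract Y X → IsZero (F.obj Y) → IsZero Y) : IsIndecomposable X := by
  refine ⟨fun h => hX.1 (F.map_isZero_of_isLeftAdjoint_of_isRightAdjoint h),
    fun Y Z p q i j hi hj ⟨t⟩ ⟨c⟩ => ?_⟩
  have hFi : F.map i ≫ F.map p = 𝟙 _ := by rw [← F.map_comp, hi, F.map_id]
  have hFj : F.map j ≫ F.map q = 𝟙 _ := by rw [← F.map_comp, hj, F.map_id]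
  exact (hX.2 _ _ _ _ hFi hFj ⟨mapIsLimitOfPreservesOfIsLimit F p q t⟩
    ⟨mapIsColimitOfPreservesOfIsColimit F i j c⟩).imp (hF Y ⟨i, p, hi⟩) (hF Z ⟨j, q, hj⟩)

end

namespace CategoryTheory.Arrow

variable {C : Type*} [Category C]

lemma isZero_of_isZero_left_of_isZero_right {A : Arrow C} (hl : IsZero A.left)
    (hr : IsZero A.right) : IsZero A :=
  ⟨fun W => ⟨⟨⟨homMk (hl.to_ W.left) (hr.to_ W.right) (hl.eq_of_src _ _)⟩,
      fun _ => hom_ext _ _ (hl.eq_of_src _ _) (hr.eq_of_src _ _)⟩⟩,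
    fun W => ⟨⟨⟨homMk (hl.from_ W.left) (hr.from_ W.right) (hr.eq_of_tgt _ _)⟩,
      fun _ => hom_ext _ _ (hl.eq_of_tgt _ _) (hr.eq_of_tgt _ _)⟩⟩⟩

@[simps]
def idFunctor : C ⥤ Arrow C where
  obj X := Arrow.mk (𝟙 X)
  map f := homMk f f

def rightFuncAdjIdFunctor : (rightFunc : Arrow C ⥤ C) ⊣ idFunctor :=
  Adjunction.mkOfHomEquiv
    { homEquiv A X :=
        { toFun f := homMk (A.hom ≫ f) f (Category.comp_id _)
          invFun g := g.right
          left_inv _ := rfl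
          right_inv g := by ext; exacts [(Arrow.w g).symm.trans (Category.comp_id _), rfl] }
      homEquiv_naturality_right _ _ := by ext; exacts [(Category.assoc _ _ _).symm, rfl] }

@[simps]
noncomputable def fromInitialFunctor [HasInitial C] : C ⥤ Arrow C where
  obj X := Arrow.mk (initial.to X)
  map f := homMk (𝟙 _) f

noncomputable def fromInitialFunctorAdjRightFunc [HasInitial C] :
    fromInitialFunctor ⊣ (rightFunc : Arrow C ⥤ C) :=
  Adjunction.mkOfHomEquiv
    { homEquiv X A :=
        { toFun f := f.right
          invFun g := homMk (initial.to _) g (initial.hom_ext _ _)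
          left_inv f := by ext; exacts [initial.hom_ext _ _, rfl]
          right_inv _ := rfl }
      homEquiv_naturality_left_symm _ _ := by ext; exacts [initial.hom_ext _ _, rfl] }

instance : (rightFunc : Arrow C ⥤ C).IsLeftAdjoint := rightFuncAdjIdFunctor.isLeftAdjoint

instance [HasInitial C] : (rightFunc : Arrow C ⥤ C).IsRightAdjoint :=
  fromInitialFunctorAdjRightFunc.isRightAdjoint

lemma isIndecomposable_mk_id [HasInitial C] {N : C} (hN : IsIndecomposable N) :
    IsIndecomposable (Arrow.mk (𝟙 N)) := by
  refine IsIndecomposable.of_map rightFunc hN fun Y h (hY : IsZero Y.right) => ?_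
  have : IsIso Y.hom := (MorphismProperty.isomorphisms C).of_retract (f := Y.hom) h
    (MorphismProperty.isomorphisms.infer_property (𝟙 N))
  exact isZero_of_isZero_left_of_isZero_right (hY.of_iso (asIso Y.hom)) hY

lemma isIndecomposable_mk_zero [HasZeroMorphisms C] [HasInitial C] {Z M : C} (hZ : IsZero Z)
    (hM : IsIndecomposable M) : IsIndecomposable (Arrow.mk (0 : Z ⟶ M)) :=
  IsIndecomposable.of_map rightFunc hM fun Y h hY =>
    isZero_of_isZero_left_of_isZero_right (RetractArrow.left (f := Y.hom) h |>.isZero hZ) hY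

lemma isSplitEpi_right {A B : Arrow C} {u : A ⟶ B} (hu : IsSplitEpi u) : IsSplitEpi u.right :=
  inferInstanceAs (IsSplitEpi (rightFunc.map u))

lemma isSplitEpi_of_isSplitEpi_right {Z M : C} (hZ : IsZero Z) (f : Z ⟶ M) {X : Arrow C}
    (u : X ⟶ Arrow.mk f) [IsSplitEpi u.right] : IsSplitEpi u :=
  IsSplitEpi.mk' ⟨homMk (hZ.to_ X.left) (section_ u.right) (hZ.eq_of_src _ _),
    hom_ext _ _ (hZ.eq_of_src _ _) (IsSplitEpi.id u.right)⟩

lemma exists_comp_homMk_eq [HasZeroMorphisms C] {N E M Z : C} (hZ : IsZero Z) {j : N ⟶ E}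
    {π : E ⟶ M} (hw : j ≫ π = 0)
    (hj : ∀ ⦃W : C⦄ (f : W ⟶ E), f ≫ π = 0 → ∃ g : W ⟶ N, g ≫ j = f)
    {X : Arrow C} (u : X ⟶ Arrow.mk (0 : Z ⟶ M)) {v : X.right ⟶ E} (hv : v ≫ π = u.right) :
    ∃ w : X ⟶ Arrow.mk j,
      w ≫ (homMk (0 : N ⟶ Z) π (by simp [hw]) : Arrow.mk j ⟶ Arrow.mk (0 : Z ⟶ M)) = u := by
  obtain ⟨g, hg⟩ := hj (X.hom ≫ v) (by simpa [hv] using u.w.symm)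
  exact ⟨homMk g v hg, hom_ext _ _ (hZ.eq_of_tgt _ _) hv⟩

end CategoryTheory.Arrow

section
variable {Λ : Type u} [Ring Λ]

lemma FGModuleCat.subsingleton_of_isZero {Z : FGModuleCat Λ} (hZ : IsZero Z) : Subsingleton Z :=
  ModuleCat.subsingleton_of_isZero ((forget₂ (FGModuleCat Λ) (ModuleCat Λ)).map_isZero hZ)

lemma isShortExactSeq_id_zero (N : FGModuleCat Λ) {Z : FGModuleCat Λ} (hZ : IsZero Z) :
    IsShortExactSeq (𝟙 N) (0 : N ⟶ Z) := by
  have := FGModuleCat.subsingleton_of_isZero hZ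
  exact ⟨Function.injective_id, fun _ => by simp [Subsingleton.elim _ (0 : Z)],
    fun _ => ⟨0, Subsingleton.elim _ _⟩⟩

lemma IsShortExactSeq.exists_lift_of_comp_eq_zero {N E M : FGModuleCat Λ} {j : N ⟶ E} {π : E ⟶ M}
    (h : IsShortExactSeq j π) ⦃W : FGModuleCat Λ⦄ (f : W ⟶ E) (hf : f ≫ π = 0) :
    ∃ g : W ⟶ N, g ≫ j = f := by
  obtain ⟨hj, hjπ, -⟩ := h
  have hf_mem (x : W) : f x ∈ LinearMap.range j.hom.hom :=
    LinearMap.mem_range.2 ((hjπ (f x)).1 (congr($hf x).trans rfl))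
  let e := LinearEquiv.ofInjective _ hj
  refine ⟨FGModuleCat.ofHom (e.symm.toLinearMap ∘ₗ f.hom.hom.codRestrict _ hf_mem), ?_⟩
  ext x
  exact congr(Subtype.val $(e.apply_symm_apply ⟨f x, hf_mem x⟩))

end

/-- Let `Λ` be an artin algebra and `0 → N →j→ E →π→ M → 0` an almost
split sequence in `mod Λ`.  Then `0 → (1_N : N → N) → (j : N → E) → (0 → M) → 0`, whose
first morphism has components `1_N` and `j` and whose second morphism has components `0`
and `π`, is an almost split sequence in `maps (mod Λ)`. -/
theorem almostSplit_maps_of_almostSplit_left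
    {Λ : Type u} [Ring Λ]
    {N E M : FGModuleCat Λ} (j : N ⟶ E) (π : E ⟶ M)
    (hw : j ≫ π = 0) (hex : IsShortExactSeq j π) (has : IsAlmostSplitSeq j π)
    (Z : FGModuleCat Λ) (hZ : IsZero Z) :
    IsAlmostSplitSeqMaps
      (X := Arrow.mk (𝟙 N)) (Y := Arrow.mk j) (Z := Arrow.mk (0 : Z ⟶ M))
      (Arrow.homMk (u := 𝟙 N) (v := j) (by simp))
      (Arrow.homMk (u := (0 : N ⟶ Z)) (v := π) (by simp [hw])) := by
  obtain ⟨hπ, hN, hM, hfac⟩ := has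
  have : HasInitial (FGModuleCat Λ) := hZ.isInitial.hasInitial
  refine ⟨⟨isShortExactSeq_id_zero N hZ, hex⟩, fun hβ => hπ (Arrow.isSplitEpi_right hβ),
    Arrow.isIndecomposable_mk_id hN, Arrow.isIndecomposable_mk_zero hZ hM, fun X u hu => ?_⟩
  obtain ⟨v, hv⟩ := hfac u.right fun _ => hu (Arrow.isSplitEpi_of_isSplitEpi_right hZ _ u)
  exact Arrow.exists_comp_homMk_eq hZ hw hex.exists_lift_of_comp_eq_zero u hv
end

section
/- Let Λ be an artin algebra, let f : M₁ → M₂ be a morphism in mod Λ, and let p : P → M₂ be an epimorphism with P a projective Λ-module. Then the morphism in maps(mod Λ) from (f : M₁ → M₂) to ([f p] : M₁ ⊕ P → M₂), with components the inclusion M₁ → M₁ ⊕ P and 1_{M₂}, is a left epimaps(mod Λ)-approximation of f. Consequently epimaps(mod Λ) is covariantly finite, and hence functorially finite, in maps(mod Λ). -/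
open CategoryTheory CategoryTheory.Limits

universe u

/-- The full subcategory of `maps (mod Λ)` consisting of the epimorphisms. -/
def Epimaps (Λ : Type u) [Ring Λ] : Set (Arrow (FGModuleCat Λ)) :=
  {a | Function.Surjective ⇑a.hom}

/-- `f : Z → M` is a right `𝒳`-approximation of `M`. -/
def IsRightApproximation {C : Type*} [Category C] (𝒳 : Set C) {Z M : C} (f : Z ⟶ M) : Prop :=
  Z ∈ 𝒳 ∧ ∀ ⦃Z' : C⦄, Z' ∈ 𝒳 → ∀ u : Z' ⟶ M, ∃ v : Z' ⟶ Z, v ≫ f = u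

/-- `M` has a right `𝒳`-approximation. -/
def HasRightApproximation {C : Type*} [Category C] (𝒳 : Set C) (M : C) : Prop :=
  ∃ (Z : C) (f : Z ⟶ M), IsRightApproximation 𝒳 f

/-- `f : M → Z` is a left `𝒳`-approximation of `M`. -/
def IsLeftApproximation {C : Type*} [Category C] (𝒳 : Set C) {M Z : C} (f : M ⟶ Z) : Prop :=
  Z ∈ 𝒳 ∧ ∀ ⦃Z' : C⦄, Z' ∈ 𝒳 → ∀ u : M ⟶ Z', ∃ v : Z ⟶ Z', f ≫ v = u

/-- `M` has a left `𝒳`-approximation. -/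
def HasLeftApproximation {C : Type*} [Category C] (𝒳 : Set C) (M : C) : Prop :=
  ∃ (Z : C) (f : M ⟶ Z), IsLeftApproximation 𝒳 f

/-!
A morphism `(u₁, u₂)` from `f` to an epimorphism `g : N₁ ↠ N₂` extends along `(i₁, 1)`: by
projectivity `p ≫ u₂` lifts through `g`, and together with `u₁` this lift defines
`M₁ ⊕ P → N₁`. The right approximation of `f` is its corestriction `M₁ ↠ im f`.

Modules here live in an arbitrary universe, so a projective module mapping onto `B` must be
found in the universe of `B`. Let `J ⊆ R` be the annihilator of `B`; `R ⧸ J` embeds in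
`End B`, so it is small. As `R` is artinian, some `J ^ (n + 1)` is generated by an idempotent
`f`; then `1 - f` acts as the identity on `B`, and the summand `(1 - f) • Λᵏ` of `Λᵏ` is a
finite `R`-module killed by `J ^ (n + 1)`, hence small.
-/

universe v w

theorem small_of_small_submodule_quotient {R : Type*} {M : Type w} [Ring R] [AddCommGroup M]
    [Module R M] (N : Submodule R M) [Small.{v} N] [Small.{v} (M ⧸ N)] : Small.{v} M := by
  refine small_of_injective (f := fun x : M ↦
    (N.mkQ x, (⟨x - (N.mkQ x).out, ?_⟩ : N))) fun x y hxy ↦ ?_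
  · rw [← Submodule.Quotient.eq, Submodule.Quotient.mk_out, Submodule.mkQ_apply]
  · simp only [Prod.mk.injEq, Subtype.mk.injEq] at hxy
    rw [hxy.1] at hxy
    simpa using hxy.2

theorem small_of_pow_le_annihilator {R : Type*} [CommRing R] [IsNoetherianRing R] {I : Ideal R}
    [Small.{v} (R ⧸ I)] (n : ℕ) {M : Type w} [AddCommGroup M] [Module R M] [Module.Finite R M]
    (h : I ^ n ≤ Module.annihilator R M) : Small.{v} M := by
  induction n generalizing M with
  | zero =>
    have : Subsingleton M := Module.annihilator_eq_top_iff.mp (top_le_iff.mp (by simpa using h))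
    infer_instance
  | succ n ih =>
    let N := I • (⊤ : Submodule R M)
    have : Small.{v} (M ⧸ N) := Module.Finite.small (R ⧸ I) _
    have : Small.{v} N := ih <| Submodule.le_annihilator_iff.mpr <| by
      rw [← Submodule.mul_smul, ← pow_succ, ← Submodule.le_annihilator_iff,
        Submodule.annihilator_top]
      exact h
    exact small_of_small_submodule_quotient N

theorem small_quotient_annihilator (R : Type*) [CommRing R] (M : Type w) [AddCommGroup M]
    [Module R M] [Small.{v} M] : Small.{v} (R ⧸ Module.annihilator R M) :=
  have : Small.{v} (AddMonoid.End M) := small_of_injective DFunLike.coe_injective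
  small_of_injective (RingHom.kerLift_injective (Module.toAddMonoidEnd R M))

theorem Ideal.exists_pow_succ_eq_span_isIdempotentElem {R : Type*} [CommRing R]
    [IsArtinianRing R] (J : Ideal R) :
    ∃ (n : ℕ) (f : R), IsIdempotentElem f ∧ J ^ (n + 1) = R ∙ f := by
  obtain ⟨n, hn⟩ := IsArtinian.monotone_stabilizes
    (⟨fun k ↦ OrderDual.toDual (J ^ k), fun _ _ h ↦ Ideal.pow_le_pow_right h⟩ : ℕ →o (Ideal R)ᵒᵈ)
  replace hn : ∀ m, n ≤ m → J ^ n = J ^ m := hn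
  have hidem : IsIdempotentElem (J ^ (n + 1)) := by
    rw [IsIdempotentElem, ← pow_add, ← hn (n + 1 + (n + 1)) (by omega), hn (n + 1) (by omega)]
  obtain ⟨f, hf, hJf⟩ := (Ideal.isIdempotentElem_iff_of_fg _ (IsNoetherian.noetherian _)).mp hidem
  exact ⟨n, f, hf, hJf⟩

theorem exists_small_projective_surjective {Λ : Type*} [Ring Λ] (R : Type*) [CommRing R]
    [IsArtinianRing R] [Algebra R Λ] [Module.Finite R Λ] (B : Type v) [AddCommGroup B]
    [Module Λ B] [Module.Finite Λ B] :
    ∃ (Q : Type v) (_ : AddCommGroup Q) (_ : Module Λ Q), Module.Finite Λ Q ∧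
      Module.Projective Λ Q ∧ ∃ g : Q →ₗ[Λ] B, Function.Surjective g := by
  let : Module R B := Module.compHom B (algebraMap R Λ)
  have : IsScalarTower R Λ B := ⟨fun r a b ↦ by
    change (r • a) • b = algebraMap R Λ r • a • b
    rw [Algebra.smul_def, mul_smul]⟩
  let J := Module.annihilator R B
  have : Small.{v} (R ⧸ J) := small_quotient_annihilator R B
  obtain ⟨N, f, hf, hJf⟩ := J.exists_pow_succ_eq_span_isIdempotentElem
  have hfJ : f ∈ J := Ideal.pow_le_self N.succ_ne_zero (hJf ▸ Ideal.mem_span_singleton_self f)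
  have hfB : ∀ b : B, f • b = 0 := Module.mem_annihilator.mp hfJ
  obtain ⟨n, g, hg⟩ := Module.Finite.exists_fin' Λ B
  let π : (Fin n → Λ) →ₗ[Λ] (Fin n → Λ) := DistribSMul.toLinearMap Λ _ (1 - f)
  let Q := LinearMap.range π
  have : Module.Projective Λ Q :=
    Module.Projective.of_split Q.subtype π.rangeRestrict <| by
      ext ⟨_, c, rfl⟩ : 2
      change (1 - f) • (1 - f) • c = (1 - f) • c
      rw [smul_smul, hf.one_sub.eq]
  have : Module.Finite R Q :=
    Module.Finite.of_surjective (π.rangeRestrict.restrictScalars R) π.surjective_rangeRestrict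
  have : Small.{v} Q := small_of_pow_le_annihilator (I := J) (N + 1) <| by
    rw [hJf, Ideal.span_singleton_le_iff_mem, Module.mem_annihilator]
    rintro ⟨_, c, rfl⟩
    ext : 1
    change f • (1 - f) • c = 0
    rw [smul_smul, hf.mul_one_sub_self, zero_smul]
  refine ⟨Shrink.{v} Q, _, _, inferInstance, inferInstance,
    g ∘ₗ Q.subtype ∘ₗ (Shrink.linearEquiv Λ Q).toLinearMap, fun b ↦ ?_⟩
  obtain ⟨c, rfl⟩ := hg b
  refine ⟨(Shrink.linearEquiv Λ Q).symm ⟨π c, c, rfl⟩, ?_⟩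
  simp only [LinearMap.coe_comp, Function.comp_apply, LinearEquiv.coe_coe,
    LinearEquiv.apply_symm_apply, Submodule.coe_subtype]
  change g ((1 - f) • c) = g c
  rw [LinearMap.map_smul_of_tower, sub_smul, one_smul, hfB, sub_zero]

theorem isLeftApproximation_homMk_of_isColimit {C : Type*} [Category C] (𝒳 : Set (Arrow C))
    {M₁ M₂ P W : C} {f : M₁ ⟶ M₂} {p : P ⟶ M₂} {i₁ : M₁ ⟶ W} {i₂ : P ⟶ W}
    (hW : IsColimit (BinaryCofan.mk i₁ i₂)) {q : W ⟶ M₂} (hq₁ : i₁ ≫ q = f) (hq₂ : i₂ ≫ q = p)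
    (hq : Arrow.mk q ∈ 𝒳)
    (hP : ∀ ⦃Z : Arrow C⦄, Z ∈ 𝒳 → ∀ g : P ⟶ Z.right, ∃ l : P ⟶ Z.left, l ≫ Z.hom = g) :
    IsLeftApproximation 𝒳 (M := Arrow.mk f) (Z := Arrow.mk q)
      (Arrow.homMk (u := i₁) (v := 𝟙 M₂) (by simp [hq₁])) := by
  refine ⟨hq, fun Z hZ u ↦ ?_⟩
  obtain ⟨l, hl⟩ := hP hZ (p ≫ u.right)
  let d : W ⟶ Z.left := hW.desc (BinaryCofan.mk u.left l)
  have hd₁ : i₁ ≫ d = u.left := hW.fac _ ⟨.left⟩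
  have hd₂ : i₂ ≫ d = l := hW.fac _ ⟨.right⟩
  have hd : d ≫ Z.hom = q ≫ u.right := by
    refine BinaryCofan.IsColimit.hom_ext hW ?_ ?_
    · change i₁ ≫ d ≫ Z.hom = i₁ ≫ q ≫ u.right
      rw [reassoc_of% hd₁, reassoc_of% hq₁]
      exact u.w
    · change i₂ ≫ d ≫ Z.hom = i₂ ≫ q ≫ u.right
      rw [reassoc_of% hd₂, reassoc_of% hq₂, hl]
  exact ⟨Arrow.homMk d u.right hd, by ext <;> simp [hd₁]⟩

section Epimaps

variable {Λ : Type u} [Ring Λ]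

theorem mem_epimaps_of_comp_eq {P W M : FGModuleCat.{v} Λ} {i : P ⟶ W} {q : W ⟶ M}
    {p : P ⟶ M} (hp : Function.Surjective p) (hq : i ≫ q = p) : Arrow.mk q ∈ Epimaps Λ :=
  fun y ↦
    let ⟨x, hx⟩ := hp y
    ⟨i x, by rw [← hx, ← hq]; rfl⟩

theorem exists_lift_of_mem_epimaps {P : FGModuleCat.{v} Λ} (hP : Module.Projective Λ P)
    ⦃Z : Arrow (FGModuleCat.{v} Λ)⦄ (hZ : Z ∈ Epimaps Λ) (g : P ⟶ Z.right) :
    ∃ l : P ⟶ Z.left, l ≫ Z.hom = g := by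
  obtain ⟨l, hl⟩ := Module.projective_lifting_property Z.hom.hom.hom g.hom.hom hZ
  exact ⟨FGModuleCat.ofHom l, FGModuleCat.hom_ext hl⟩

theorem hasLeftApproximation_epimaps (R : Type*) [CommRing R] [IsArtinianRing R] [Algebra R Λ]
    [Module.Finite R Λ] (a : Arrow (FGModuleCat.{v} Λ)) : HasLeftApproximation (Epimaps Λ) a := by
  obtain ⟨Q, _, _, _, hQ, g, hg⟩ := exists_small_projective_surjective (Λ := Λ) R a.right
  let p : FGModuleCat.of Λ Q ⟶ a.right := FGModuleCat.ofHom g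
  exact ⟨_, _, isLeftApproximation_homMk_of_isColimit _ (coprodIsCoprod _ _)
    (coprod.inl_desc a.hom p) (coprod.inr_desc a.hom p)
    (mem_epimaps_of_comp_eq hg (coprod.inr_desc _ _)) (exists_lift_of_mem_epimaps hQ)⟩

theorem hasRightApproximation_epimaps (a : Arrow (FGModuleCat.{v} Λ)) :
    HasRightApproximation (Epimaps Λ) a := by
  let φ := a.hom.hom.hom
  let I := LinearMap.range φ
  refine ⟨Arrow.mk (FGModuleCat.ofHom φ.rangeRestrict : a.left ⟶ FGModuleCat.of Λ I),
    Arrow.homMk (𝟙 _) (FGModuleCat.ofHom I.subtype) rfl, φ.surjective_rangeRestrict,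
    fun Z hZ u ↦ ?_⟩
  have hu : ∀ y, u.right y ∈ I := fun y ↦ by
    obtain ⟨x, rfl⟩ := hZ y
    exact ⟨u.left x, congr($(u.w) x)⟩
  refine ⟨Arrow.homMk u.left (FGModuleCat.ofHom (LinearMap.codRestrict I u.right.hom.hom hu))
    (FGModuleCat.hom_ext (LinearMap.ext fun x ↦ Subtype.ext congr($(u.w) x))), ?_⟩
  ext <;> rfl

end Epimaps

/-- Let `Λ` be an artin algebra, `f : M₁ → M₂` in `mod Λ`, and
`p : P ↠ M₂` an epimorphism with `P` projective.  Let `W = M₁ ⊕ P` (encoded as a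
coproduct with injections `i₁, i₂`) and `q = [f p] : W → M₂` the morphism with
components `f` and `p`.  Then `(i₁, 1_{M₂}) : (f : M₁ → M₂) ⟶ (q : M₁ ⊕ P → M₂)` is a
left `epimaps (mod Λ)`-approximation of `f`; consequently `epimaps (mod Λ)` is
covariantly finite, hence functorially finite, in `maps (mod Λ)`. -/
theorem epimaps_leftApproximation
    {R : Type u} [CommRing R] [IsArtinianRing R]
    {Λ : Type u} [Ring Λ] [Algebra R Λ] [Module.Finite R Λ]
    {M₁ M₂ P W : FGModuleCat Λ} (f : M₁ ⟶ M₂) (p : P ⟶ M₂)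
    (hP : Module.Projective Λ P) (hp : Function.Surjective ⇑p)
    (i₁ : M₁ ⟶ W) (i₂ : P ⟶ W) (hW : Nonempty (IsColimit (BinaryCofan.mk i₁ i₂)))
    (q : W ⟶ M₂) (hq₁ : i₁ ≫ q = f) (hq₂ : i₂ ≫ q = p) :
    IsLeftApproximation (Epimaps Λ) (M := Arrow.mk f) (Z := Arrow.mk q)
      (Arrow.homMk (u := i₁) (v := 𝟙 M₂) (by simp [hq₁])) ∧
    (∀ a : Arrow (FGModuleCat Λ), HasLeftApproximation (Epimaps Λ) a) ∧
    (∀ a : Arrow (FGModuleCat Λ), HasRightApproximation (Epimaps Λ) a) :=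
  ⟨isLeftApproximation_homMk_of_isColimit _ hW.some hq₁ hq₂ (mem_epimaps_of_comp_eq hp hq₂)
      (exists_lift_of_mem_epimaps hP),
    hasLeftApproximation_epimaps R, hasRightApproximation_epimaps⟩
end
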